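/- arXiv:1606.05268 — 3 statements merged into one kernel-verified Lean document; each statement's English description precedes it below -/
import Mathlib

section
/- If C ⊆ A^n is a code of cardinality m ≥ 3 with encoding bijection λ : M → C, then Mon(C) = Stab(η_λ), where Stab(η) = {g ∈ S(M) : g(η) = η}. -/
/-- Partitions of `Fin m` are represented as finsets of finsets. -/
abbrev Ptn (m : ℕ) := Finset (Finset (Fin m))

/-- `α` is a partition of `Fin m`: all classes are nonempty and every element
belongs to exactly one class. -/
def IsPartition {m : ℕ} (α : Ptn m) : Prop :=
  (∀ c ∈ α, c.Nonempty) ∧ ∀ i : Fin m, ∃! c, c ∈ α ∧ i ∈ c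

/-- `P`: the set of partitions of `M = Fin m` into at most `q` nonempty classes. -/
def Pset (m q : ℕ) : Set (Ptn m) :=
  {α | IsPartition α ∧ α.card ≤ q}

/-- `P₂`: the partitions of the form `{{i,j}, M ∖ {i,j}}` for 2-element subsets `{i,j}`. -/
def P2set (m : ℕ) : Set (Ptn m) :=
  {α | ∃ p : Finset (Fin m), p.card = 2 ∧ α = {p, pᶜ}}

/-- `O` as a set: the 2-element subsets of `M = Fin m`. -/
def Oset (m : ℕ) : Set (Finset (Fin m)) := {p | p.card = 2}

/-- `O` as a type: the 2-element subsets of `M = Fin m`. -/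
abbrev OO (m : ℕ) := {p : Finset (Fin m) // p.card = 2}

/-- `P` as a type. -/
abbrev PP (m q : ℕ) := {α : Ptn m // α ∈ Pset m q}

noncomputable instance (m q : ℕ) : Fintype (PP m q) := Fintype.ofFinite _

/-- The canonical action of `S(M)` on partitions: `g({c₁,…,cₜ}) = {g(c₁),…,g(cₜ)}`. -/
def permPart {m : ℕ} (g : Equiv.Perm (Fin m)) (α : Ptn m) : Ptn m :=
  α.image fun c => c.image g

/-- The canonical action of `S(M)` on subsets of `M`. -/
def permPair {m : ℕ} (g : Equiv.Perm (Fin m)) (p : Finset (Fin m)) : Finset (Fin m) :=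
  p.image g

/-- `H` is closed under the action `act` on `S` if every `g` that maps each
`H`-orbit of `S` onto itself belongs to `H`. -/
def ClosedUnder {m : ℕ} {X : Type*} (act : Equiv.Perm (Fin m) → X → X) (S : Set X)
    (H : Set (Equiv.Perm (Fin m))) : Prop :=
  ∀ g : Equiv.Perm (Fin m), (∀ x ∈ S, ∃ h ∈ H, act g x = act h x) → g ∈ H

section Code

variable {m n : ℕ} {A : Type*} [Fintype A] [DecidableEq A]

/-- A map `h : Aⁿ → Aⁿ` is monomial if `h(a) = (σ₁(a_{π(1)}), …, σₙ(a_{π(n)}))`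
for a permutation `π ∈ Sₙ` and permutations `σ₁,…,σₙ` of `A`. -/
def IsMonomial (h : (Fin n → A) → (Fin n → A)) : Prop :=
  ∃ (π : Equiv.Perm (Fin n)) (σ : Fin n → Equiv.Perm A),
    ∀ (a : Fin n → A) (k : Fin n), h a k = σ k (a (π k))

/-- `Iso(C)`: the permutations `g` of the messages such that `λ ∘ g ∘ λ⁻¹` is a
Hamming isometry of the code encoded by `lam`. -/
def IsoSet (lam : Fin m → Fin n → A) : Set (Equiv.Perm (Fin m)) :=
  {g | ∀ i j : Fin m, hammingDist (lam (g i)) (lam (g j)) = hammingDist (lam i) (lam j)}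

/-- `Mon(C)`: the elements of `Iso(C)` such that `λ ∘ g ∘ λ⁻¹` extends to a
monomial map of `Aⁿ`. -/
def MonSet (lam : Fin m → Fin n → A) : Set (Equiv.Perm (Fin m)) :=
  {g | g ∈ IsoSet lam ∧
    ∃ h : (Fin n → A) → (Fin n → A), IsMonomial h ∧ ∀ i : Fin m, h (lam i) = lam (g i)}

/-- `Ψ(x) = {x⁻¹(a) : a ∈ A} ∖ {∅}`, the partition of `M` induced by `x : M → A`. -/
def PsiF (x : Fin m → A) : Ptn m :=
  (Finset.univ.image fun a : A => Finset.univ.filter fun i : Fin m => x i = a).erase ∅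

/-- The multiplicity function `η_λ(α) = |{k : Ψ(λ_k) = α}|`. -/
def eta (lam : Fin m → Fin n → A) (α : Ptn m) : ℚ :=
  (((Finset.univ : Finset (Fin n)).filter fun k => PsiF (fun i => lam i k) = α).card : ℚ)

/-- The multiplicity function, restricted to `P`. -/
def etaP (q : ℕ) (lam : Fin m → Fin n → A) : PP m q → ℚ := fun α => eta lam α.1

end Code

open Classical in
/-- `Δ_α({i,j}) = 0` if `i` and `j` lie in the same class of `α`, and `1` otherwise. -/
noncomputable def Delta {m q : ℕ} (α : PP m q) (p : OO m) : ℚ :=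
  if ∃ c ∈ α.1, p.1 ⊆ c then 0 else 1

/-- The linear map `W : F(P,ℚ) → F(O,ℚ)`, `W(η)(p) = Σ_{α∈P} η(α)Δ_α(p)`. -/
noncomputable def WLin (m q : ℕ) : (PP m q → ℚ) →ₗ[ℚ] (OO m → ℚ) where
  toFun η := fun p => ∑ α : PP m q, η α * Delta α p
  map_add' x y := by
    funext p
    simp [add_mul, Finset.sum_add_distrib]
  map_smul' c x := by
    funext p
    simp [Finset.mul_sum, mul_assoc]

/-- The matrix `B`: `B_{p,t} = 1` if `|p ∩ t| = 1`, and `0` otherwise. -/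
def Bmat (m : ℕ) : Matrix (OO m) (OO m) ℚ :=
  Matrix.of fun p t => if (p.1 ∩ t.1).card = 1 then 1 else 0

/-- The matrix `D`: `2(m−2)(m−4)·D_{p,t}` equals `−m²+8m−14` if `p = t`,
`m−4` if `|p∩t| = 1`, and `−2` if `p ∩ t = ∅`. -/
def Dmat (m : ℕ) : Matrix (OO m) (OO m) ℚ :=
  Matrix.of fun p t =>
    (if p = t then -(m : ℚ) ^ 2 + 8 * m - 14
      else if (p.1 ∩ t.1).card = 1 then (m : ℚ) - 4 else -2) /
      (2 * ((m : ℚ) - 2) * ((m : ℚ) - 4))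

/-- `ξ_x = Σ_{r∈O} x(r) Σ_{p∈O} D_{r,p} · id_{{p, M∖p}}`. -/
noncomputable def xi (m q : ℕ) (x : OO m → ℚ) : PP m q → ℚ := fun α =>
  ∑ r : OO m, x r * ∑ p : OO m, Dmat m r p * (if α.1 = ({p.1, p.1ᶜ} : Ptn m) then 1 else 0)

/-- `ζ_α = id_α − ξ_{Δ_α}`. -/
noncomputable def zeta (m q : ℕ) (α : PP m q) : PP m q → ℚ :=
  (fun β => if β = α then 1 else 0) - xi m q fun p => Delta α p

/-- `V₀`: the functions in `F(P,ℚ)` vanishing on `P ∖ P₂`. -/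
def V0 (m q : ℕ) : Set (PP m q → ℚ) :=
  {η | ∀ α : PP m q, (α : Ptn m) ∉ P2set m → η α = 0}

open Classical in
/-- `id_{P₂} = Σ_{α∈P₂} id_α`. -/
noncomputable def idP2 (m q : ℕ) : PP m q → ℚ := fun α =>
  if (α : Ptn m) ∈ P2set m then 1 else 0

theorem permPart_mem_Pset {m q : ℕ} (g : Equiv.Perm (Fin m)) {α : Ptn m}
    (hα : α ∈ Pset m q) : permPart g α ∈ Pset m q := by
  obtain ⟨⟨hne, huniq⟩, hcard⟩ := hα
  refine ⟨⟨?_, ?_⟩, le_trans Finset.card_image_le hcard⟩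
  · intro c hc
    simp only [permPart, Finset.mem_image] at hc
    obtain ⟨d, hd, rfl⟩ := hc
    exact (hne d hd).image g
  · intro i
    obtain ⟨c, ⟨hc, hic⟩, hun⟩ := huniq (g.symm i)
    refine ⟨c.image g, ⟨?_, ?_⟩, ?_⟩
    · simp only [permPart, Finset.mem_image]
      exact ⟨c, hc, rfl⟩
    · exact Finset.mem_image.2 ⟨g.symm i, hic, g.apply_symm_apply i⟩
    · rintro d ⟨hd, hid⟩
      simp only [permPart, Finset.mem_image] at hd
      obtain ⟨e, he, rfl⟩ := hd
      rw [Finset.mem_image] at hid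
      obtain ⟨j, hj, hji⟩ := hid
      have hjs : j = g.symm i := by
        apply g.injective
        rw [hji, g.apply_symm_apply]
      subst hjs
      rw [hun e ⟨he, hj⟩]

/-- The action of `S(M)` on `P`. -/
def permPP {m q : ℕ} (g : Equiv.Perm (Fin m)) (α : PP m q) : PP m q :=
  ⟨permPart g α.1, permPart_mem_Pset g α.2⟩

/-- The action of `S(M)` on `F(P,ℚ)`: `g(η)(α) = η(g⁻¹(α))`. -/
def permF {m q : ℕ} (g : Equiv.Perm (Fin m)) (η : PP m q → ℚ) : PP m q → ℚ :=
  fun α => η (permPP g⁻¹ α)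

/-- `Stab(η) = {g ∈ S(M) : g(η) = η}`. -/
def StabSet {m q : ℕ} (η : PP m q → ℚ) : Set (Equiv.Perm (Fin m)) :=
  {g | permF g η = η}

/-- `Stab_W(η) = {g ∈ S(M) : W(g(η)) = W(η)}`. -/
def StabWSet (m q : ℕ) (η : PP m q → ℚ) : Set (Equiv.Perm (Fin m)) :=
  {g | WLin m q (permF g η) = WLin m q η}

set_option linter.unusedSectionVars false

section AuxLemmas
variable {m n : ℕ} {A : Type*} [Fintype A] [DecidableEq A]

lemma permPart_one {m : ℕ} (α : Ptn m) : permPart 1 α = α := by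
  simp [permPart, Finset.image_id]

lemma permPart_mul {m : ℕ} (g h : Equiv.Perm (Fin m)) (α : Ptn m) :
    permPart g (permPart h α) = permPart (g * h) α := by
  simp only [permPart, Finset.image_image]
  congr 1
  funext c
  simp [Finset.image_image, Function.comp]

lemma permPart_cancel {m : ℕ} (g : Equiv.Perm (Fin m)) (α : Ptn m) :
    permPart g (permPart g⁻¹ α) = α := by
  rw [permPart_mul, mul_inv_cancel, permPart_one]

lemma permPart_eq_iff {m : ℕ} (g : Equiv.Perm (Fin m)) (α β : Ptn m) :
    permPart g α = permPart g β ↔ α = β := by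
  constructor
  · intro h
    have := congrArg (permPart g⁻¹) h
    rwa [permPart_mul, permPart_mul, inv_mul_cancel, permPart_one, permPart_one] at this
  · rintro rfl; rfl

lemma psiF_comp_perm (x : Fin m → A) (g : Equiv.Perm (Fin m)) :
    PsiF (fun i => x (g i)) = permPart g⁻¹ (PsiF x) := by
  have key : ∀ a : A, (Finset.univ.filter fun i : Fin m => x (g i) = a)
      = (Finset.univ.filter fun i : Fin m => x i = a).image ⇑g⁻¹ := by
    intro a
    ext j
    simp only [Finset.mem_filter, Finset.mem_univ, true_and, Finset.mem_image]
    constructor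
    · intro hj
      exact ⟨g j, by simp [hj], by simp⟩
    · rintro ⟨i, hi, rfl⟩
      simpa using hi
  ext c
  simp only [PsiF, permPart, Finset.mem_erase, Finset.mem_image, Finset.mem_univ, true_and]
  constructor
  · rintro ⟨hne, a, rfl⟩
    refine ⟨Finset.univ.filter fun i => x i = a, ⟨?_, a, rfl⟩, ?_⟩
    · intro h0
      apply hne
      rw [key a, h0, Finset.image_empty]
    · first | exact key a | exact (key a).symm
  · rintro ⟨d, ⟨hdne, a, rfl⟩, rfl⟩
    refine ⟨?_, a, ?_⟩
    · rw [← Finset.nonempty_iff_ne_empty] at hdne ⊢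
      exact hdne.image _
    · first | exact key a | exact (key a).symm

lemma psiF_perm_comp (σ : Equiv.Perm A) (x : Fin m → A) :
    PsiF (fun i => σ (x i)) = PsiF x := by
  unfold PsiF
  congr 1
  have h1 : ∀ a : A, (Finset.univ.filter fun i : Fin m => σ (x i) = a)
      = Finset.univ.filter fun i : Fin m => x i = σ⁻¹ a := by
    intro a
    ext i
    simp only [Finset.mem_filter, Finset.mem_univ, true_and]
    constructor
    · rintro rfl; simp
    · intro hxa; rw [hxa]; simp
  calc (Finset.univ.image fun a : A => Finset.univ.filter fun i : Fin m => σ (x i) = a)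
      = Finset.univ.image fun a : A => Finset.univ.filter fun i : Fin m => x i = σ⁻¹ a := by
        simp only [h1]
    _ = (Finset.univ.image fun a : A => σ⁻¹ a).image fun b => Finset.univ.filter fun i : Fin m => x i = b := by
        rw [Finset.image_image]; rfl
    _ = _ := by rw [Finset.image_univ_equiv]

lemma psiF_mem_Pset (x : Fin m → A) : PsiF x ∈ Pset m (Fintype.card A) := by
  refine ⟨⟨?_, ?_⟩, ?_⟩
  · intro c hc
    rw [PsiF, Finset.mem_erase] at hc
    exact Finset.nonempty_of_ne_empty hc.1
  · intro i
    refine ⟨Finset.univ.filter fun j => x j = x i, ⟨?_, by simp⟩, ?_⟩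
    · rw [PsiF, Finset.mem_erase]
      refine ⟨?_, Finset.mem_image.2 ⟨x i, Finset.mem_univ _, rfl⟩⟩
      intro h0
      have : i ∈ (∅ : Finset (Fin m)) := by rw [← h0]; simp
      simp at this
    · rintro d ⟨hd, hid⟩
      rw [PsiF, Finset.mem_erase, Finset.mem_image] at hd
      obtain ⟨-, a, -, rfl⟩ := hd
      have : x i = a := by simpa using hid
      subst this; rfl
  · calc (PsiF x).card ≤ (Finset.univ.image fun a : A => Finset.univ.filter fun i : Fin m => x i = a).card :=
        Finset.card_le_card (Finset.erase_subset _ _)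
    _ ≤ (Finset.univ : Finset A).card := Finset.card_image_le
    _ = Fintype.card A := Finset.card_univ

lemma psiF_eq_iff {x y : Fin m → A} (h : PsiF x = PsiF y) (i j : Fin m) :
    x i = x j ↔ y i = y j := by
  have key : ∀ (u v : Fin m → A), PsiF u = PsiF v → u i = u j → v i = v j := by
    intro u v huv hij
    have hc : (Finset.univ.filter fun k => u k = u i) ∈ PsiF v := by
      rw [← huv, PsiF, Finset.mem_erase]
      refine ⟨?_, Finset.mem_image.2 ⟨u i, Finset.mem_univ _, rfl⟩⟩
      intro h0
      have : i ∈ (∅ : Finset (Fin m)) := by rw [← h0]; simp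
      simp at this
    rw [PsiF, Finset.mem_erase, Finset.mem_image] at hc
    obtain ⟨-, a, -, ha⟩ := hc
    have hi : v i = a := by
      have hmem : i ∈ Finset.univ.filter fun k => u k = u i := by simp
      rw [← ha] at hmem; simpa using hmem
    have hj : v j = a := by
      have hmem : j ∈ Finset.univ.filter fun k => u k = u i := by simp [hij]
      rw [← ha] at hmem; simpa using hmem
    rw [hi, hj]
  exact ⟨key x y h, key y x h.symm⟩

lemma exists_perm_comp (x y : Fin m → A) (h : ∀ i j, x i = x j ↔ y i = y j) :
    ∃ σ : Equiv.Perm A, ∀ i, y i = σ (x i) := by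
  classical
  set S : Finset A := Finset.univ.image x with hS
  set T : Finset A := Finset.univ.image y with hT
  have pick : ∀ a : {a // a ∈ S}, ∃ i : Fin m, x i = a.1 := by
    rintro ⟨a, ha⟩
    obtain ⟨i, -, hi⟩ := Finset.mem_image.1 ha
    exact ⟨i, hi⟩
  choose pk hpk using pick
  let f : {a // a ∈ S} → {a // a ∈ T} := fun a => ⟨y (pk a), Finset.mem_image.2 ⟨pk a, Finset.mem_univ _, rfl⟩⟩
  have hfval : ∀ a, (f a).1 = y (pk a) := fun a => rfl
  have hfinj : Function.Injective f := by
    rintro a b hab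
    have h1 : y (pk a) = y (pk b) := by rw [← hfval a, ← hfval b, hab]
    have h2 := (h (pk a) (pk b)).2 h1
    exact Subtype.ext (by rw [← hpk a, ← hpk b, h2])
  have hfsurj : Function.Surjective f := by
    rintro ⟨b, hb⟩
    obtain ⟨j, -, hj⟩ := Finset.mem_image.1 hb
    refine ⟨⟨x j, Finset.mem_image.2 ⟨j, Finset.mem_univ _, rfl⟩⟩, Subtype.ext ?_⟩
    rw [hfval]
    show y (pk ⟨x j, _⟩) = b
    rw [← hj]
    exact (h _ j).1 (hpk ⟨x j, _⟩)
  let e := Equiv.ofBijective f ⟨hfinj, hfsurj⟩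
  refine ⟨e.extendSubtype, fun i => ?_⟩
  have hmm : x i ∈ S := Finset.mem_image.2 ⟨i, Finset.mem_univ _, rfl⟩
  rw [e.extendSubtype_apply_of_mem (x i) hmm]
  have : e ⟨x i, hmm⟩ = f ⟨x i, hmm⟩ := rfl
  rw [this, hfval]
  exact (h _ _).1 (hpk ⟨x i, hmm⟩).symm

lemma exists_perm_of_fiber_counts {ι κ : Type*} [Fintype ι] [DecidableEq ι] [DecidableEq κ]
    (f g : ι → κ)
    (h : ∀ b, (Finset.univ.filter fun k => f k = b).card = (Finset.univ.filter fun k => g k = b).card) :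
    ∃ π : Equiv.Perm ι, ∀ k, f (π k) = g k := by
  classical
  have e : ∀ b : κ, {k // g k = b} ≃ {k // f k = b} := by
    intro b
    apply Fintype.equivOfCardEq
    rw [Fintype.card_subtype, Fintype.card_subtype, ← h b]
  let π : ι ≃ ι := ((Equiv.sigmaFiberEquiv g).symm.trans (Equiv.sigmaCongrRight e)).trans (Equiv.sigmaFiberEquiv f)
  refine ⟨π, fun k => ?_⟩
  show f (((Equiv.sigmaFiberEquiv g).symm.trans (Equiv.sigmaCongrRight e)).trans (Equiv.sigmaFiberEquiv f) k) = g k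
  simp only [Equiv.trans_apply, Equiv.sigmaFiberEquiv, Equiv.sigmaCongrRight, Equiv.coe_fn_mk, Equiv.coe_fn_symm_mk]
  exact (e (g k) ⟨k, rfl⟩).2

lemma hammingDist_monomial (π : Equiv.Perm (Fin n)) (σ : Fin n → Equiv.Perm A)
    (a b : Fin n → A) :
    hammingDist (fun k => σ k (a (π k))) (fun k => σ k (b (π k))) = hammingDist a b := by
  classical
  unfold hammingDist
  apply Finset.card_bij (fun k _ => π k)
  · intro k hk
    simp only [Finset.mem_filter, Finset.mem_univ, true_and] at *
    intro hab
    exact hk (by rw [hab])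
  · intro k₁ h₁ k₂ h₂ hk
    exact π.injective hk
  · intro k hk
    refine ⟨π.symm k, ?_, by simp⟩
    simp only [Finset.mem_filter, Finset.mem_univ, true_and, Equiv.apply_symm_apply] at *
    intro hab
    exact hk ((σ (π.symm k)).injective hab)

lemma permPart_inv_cancel' {m : ℕ} (g : Equiv.Perm (Fin m)) (α : Ptn m) :
    permPart g⁻¹ (permPart g α) = α := by
  rw [permPart_mul, inv_mul_cancel, permPart_one]

lemma permPart_eq_inv_iff {m : ℕ} (g : Equiv.Perm (Fin m)) (α β : Ptn m) :
    α = permPart g⁻¹ β ↔ permPart g α = β := by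
  constructor
  · rintro rfl; exact permPart_cancel g β
  · rintro rfl; exact (permPart_inv_cancel' g α).symm

lemma permPart_inv_eq_iff {m : ℕ} (g : Equiv.Perm (Fin m)) (α β : Ptn m) :
    permPart g⁻¹ α = β ↔ α = permPart g β := by
  have h := permPart_eq_inv_iff g⁻¹ α β
  rw [inv_inv] at h
  exact h.symm

lemma card_filter_equiv {ι : Type*} [Fintype ι] [DecidableEq ι] (e : Equiv.Perm ι)
    (P : ι → Prop) [DecidablePred P] :
    (Finset.univ.filter fun k => P (e k)).card = (Finset.univ.filter P).card := by
  apply Finset.card_bij (fun k _ => e k)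
  · intro k hk
    simp only [Finset.mem_filter, Finset.mem_univ, true_and] at *
    exact hk
  · intro k₁ h₁ k₂ h₂ hk
    exact e.injective hk
  · intro k hk
    refine ⟨e.symm k, ?_, by simp⟩
    simp only [Finset.mem_filter, Finset.mem_univ, true_and, Equiv.apply_symm_apply] at *
    exact hk

end AuxLemmas

/-- `Mon(C) = Stab(η_λ)`. -/
theorem mon_eq_stab {A : Type*} [Fintype A] [DecidableEq A]
    (hq : 2 ≤ Fintype.card A) {m n : ℕ} (hm : 3 ≤ m) (hn : 0 < n)
    (lam : Fin m → Fin n → A) (hlam : Function.Injective lam) :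
    MonSet lam = StabSet (etaP (Fintype.card A) lam) := by
  classical
  ext g
  simp only [MonSet, StabSet, Set.mem_setOf_eq]
  constructor
  · rintro ⟨-, h, ⟨π, σ, hmono⟩, hcomm⟩
    have hcol : ∀ k i, lam (g i) k = σ k (lam i (π k)) := fun k i => by
      rw [← hcomm i, hmono]
    have hstar : ∀ k, PsiF (fun i => lam (g i) k) = PsiF (fun i => lam i (π k)) := by
      intro k
      have he : (fun i => lam (g i) k) = fun i => σ k (lam i (π k)) := funext fun i => hcol k i
      rw [he, psiF_perm_comp]
    have hstar2 : ∀ k, permPart g⁻¹ (PsiF fun i => lam i k) = PsiF (fun i => lam i (π k)) := by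
      intro k
      rw [← hstar k]
      exact (psiF_comp_perm (fun i => lam i k) g).symm
    have hstar3 : ∀ k, permPart g (PsiF fun i => lam i k) = PsiF (fun i => lam i (π.symm k)) := by
      intro k
      have h2 := hstar2 (π.symm k)
      rw [Equiv.apply_symm_apply] at h2
      rw [← h2, permPart_cancel]
    funext α
    show eta lam (permPart g⁻¹ α.1) = eta lam α.1
    unfold eta
    rw [Nat.cast_inj]
    have step1 : (Finset.univ.filter fun k => PsiF (fun i => lam i k) = permPart g⁻¹ α.1)
        = Finset.univ.filter fun k => PsiF (fun i => lam i (π.symm k)) = α.1 := by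
      apply Finset.filter_congr
      intro k _
      rw [← hstar3 k]
      exact permPart_eq_inv_iff g _ _
    rw [step1]
    exact card_filter_equiv π.symm (fun j => PsiF (fun i => lam i j) = α.1)
  · intro hg
    have hcount : ∀ β : Ptn m,
        (Finset.univ.filter fun k => PsiF (fun i => lam i k) = β).card
          = (Finset.univ.filter fun k => PsiF (fun i => lam (g i) k) = β).card := by
      intro β
      by_cases hβ : β ∈ Pset m (Fintype.card A)
      · have h1 : (Finset.univ.filter fun k => PsiF (fun i => lam (g i) k) = β)
            = Finset.univ.filter fun k => PsiF (fun i => lam i k) = permPart g β := by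
          apply Finset.filter_congr
          intro k _
          rw [show PsiF (fun i => lam (g i) k) = permPart g⁻¹ (PsiF fun i => lam i k) from
            psiF_comp_perm (fun i => lam i k) g]
          exact permPart_inv_eq_iff g _ _
        rw [h1]
        have h2 := congrFun hg ⟨permPart g β, permPart_mem_Pset g hβ⟩
        simp only [permF, permPP, etaP] at h2
        rw [permPart_inv_cancel'] at h2
        unfold eta at h2
        rw [Nat.cast_inj] at h2
        exact h2
      · have e1 : (Finset.univ.filter fun k => PsiF (fun i => lam i k) = β) = ∅ := by
          apply Finset.filter_false_of_mem
          intro k _ hk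
          exact hβ (hk ▸ psiF_mem_Pset _)
        have e2 : (Finset.univ.filter fun k => PsiF (fun i => lam (g i) k) = β) = ∅ := by
          apply Finset.filter_false_of_mem
          intro k _ hk
          exact hβ (hk ▸ psiF_mem_Pset _)
        rw [e1, e2]
    obtain ⟨π, hπ⟩ := exists_perm_of_fiber_counts
      (fun k => PsiF (fun i => lam i k)) (fun k => PsiF (fun i => lam (g i) k)) hcount
    have hσ : ∀ k, ∃ σk : Equiv.Perm A, ∀ i, lam (g i) k = σk (lam i (π k)) := by
      intro k
      exact exists_perm_comp _ _ (fun i j => psiF_eq_iff (hπ k) i j)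
    choose σ hσ using hσ
    refine ⟨?_, fun a k => σ k (a (π k)), ⟨π, σ, fun a k => rfl⟩, ?_⟩
    · intro i j
      have key := hammingDist_monomial π σ (lam i) (lam j)
      have e1 : (fun k => σ k (lam i (π k))) = lam (g i) := funext fun k => (hσ k i).symm
      have e2 : (fun k => σ k (lam j (π k))) = lam (g j) := funext fun k => (hσ k j).symm
      rw [e1, e2] at key
      exact key
    · intro i
      funext k
      exact (hσ k i).symm
end

section
/- Let q ≥ 2 and let m be an integer with m ≥ 5 or m = 3. For every x ∈ F(O,ℚ), W(ξ_x) = x; in particular, the linear map W : F(P,ℚ) → F(O,ℚ) is surjective. -/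
/-!
The function `ξ_x` is supported on the two-class partitions `{p, M ∖ p}`, and
`Δ_{p, M∖p}(t) = [|p ∩ t| = 1] = B_{p,t}`; hence `W(ξ_x) = x D B` and everything reduces to
`D B = 1`. For fixed `r, t` the pairs `p` with `|p ∩ t| = 1` are the `{e, x}` with `e ∈ t`,
`x ∉ t`, and writing `a` for the indicator of `r`,
`2(m-2)(m-4) D_{r,{e,x}} = -2 + (m-2)(a_e + a_x) - (m-2)(m-4) a_e a_x`.
Summing this bilinear expression gives `(m-2)(m-4) k (k-1)` with `k = |t ∩ r| ∈ {0, 1, 2}`,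
and `k (k-1) / 2 = δ_{r,t}`.
-/

open Finset
open scoped Matrix

section TwoSets

variable {α : Type*} [DecidableEq α]

lemma card_pair_inter {a b : α} (hab : a ≠ b) (s : Finset α) :
    #({a, b} ∩ s) = (if a ∈ s then 1 else 0) + (if b ∈ s then 1 else 0) := by
  split_ifs with ha hb hb <;>
    simp [insert_inter_of_mem, insert_inter_of_notMem, singleton_inter_of_mem,
      singleton_inter_of_notMem, *]

lemma card_inter_le_two {s t : Finset α} (hs : #s = 2) : #(s ∩ t) ≤ 2 :=
  hs ▸ card_le_card inter_subset_left

lemma eq_iff_card_inter_eq_two {s t : Finset α} (hs : #s = 2) (ht : #t = 2) :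
    s = t ↔ #(s ∩ t) = 2 := by
  refine ⟨fun h => by rw [h, inter_self, ht], fun h => ?_⟩
  have hst : s ∩ t = s := eq_of_subset_of_card_le inter_subset_left (by omega)
  exact eq_of_subset_of_card_le (inter_eq_left.1 hst) (by omega)

lemma pair_eq_iff {a b : α} (hab : a ≠ b) {s : Finset α} (hs : #s = 2) :
    {a, b} = s ↔ a ∈ s ∧ b ∈ s := by
  rw [eq_iff_card_inter_eq_two (card_pair hab) hs, card_pair_inter hab]
  split_ifs <;> simp [*]

variable [Fintype α]

lemma sum_pairs_card_inter_eq_one {β : Type*} [AddCommMonoid β] (t : Finset α)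
    (g : Finset α → β) :
    ∑ p ∈ univ.filter (fun p : {p : Finset α // #p = 2} => #(p.1 ∩ t) = 1), g p.1
      = ∑ e ∈ t, ∑ x ∈ tᶜ, g {e, x} := by
  rw [← sum_product']
  symm
  refine sum_bij (fun ex hex => ⟨{ex.1, ex.2}, card_pair ?ne⟩) ?mem ?inj ?surj (fun _ _ => rfl)
  case ne =>
    obtain ⟨he, hx⟩ := mem_product.1 hex
    exact fun h => mem_compl.1 hx (by rwa [← h])
  case mem =>
    rintro ⟨e, x⟩ hex
    simp only [mem_product, mem_compl] at hex
    obtain ⟨he, hx⟩ := hex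
    simp [he, hx]
  case inj =>
    rintro ⟨e, x⟩ hex ⟨e', x'⟩ hex' h
    simp only [mem_product, mem_compl] at hex hex'
    have h' : ({e, x} : Finset α) = {e', x'} := congrArg Subtype.val h
    have he : e ∈ ({e', x'} : Finset α) := h' ▸ mem_insert_self e {x}
    have hx : x ∈ ({e', x'} : Finset α) := h' ▸ mem_insert_of_mem (mem_singleton_self x)
    simp only [mem_insert, mem_singleton] at he hx
    rcases he with rfl | rfl <;> rcases hx with rfl | rfl <;> tauto
  case surj =>
    rintro ⟨p, hp⟩ hpt
    obtain ⟨a, b, hab, rfl⟩ := card_eq_two.1 hp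
    simp only [mem_filter, mem_univ, true_and, card_pair_inter hab] at hpt
    split_ifs at hpt with ha hb hb
    · omega
    · exact ⟨(a, b), mem_product.2 ⟨ha, mem_compl.2 hb⟩, rfl⟩
    · exact ⟨(b, a), mem_product.2 ⟨hb, mem_compl.2 ha⟩, Subtype.ext (pair_comm b a)⟩
    · omega

end TwoSets

lemma sum_sum_add_mul {ι R : Type*} [CommSemiring R] (s u : Finset ι) (a : ι → R)
    (c₀ c₁ c₂ : R) :
    ∑ e ∈ s, ∑ x ∈ u, (c₀ + c₁ * (a e + a x) + c₂ * (a e * a x))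
      = #s * #u * c₀ + c₁ * (#u * ∑ e ∈ s, a e + #s * ∑ x ∈ u, a x)
        + c₂ * ((∑ e ∈ s, a e) * ∑ x ∈ u, a x) := by
  simp only [mul_add, sum_add_distrib, ← mul_sum, sum_const, nsmul_eq_mul, sum_mul_sum]
  ring

section PairPartition

variable {m q : ℕ}

lemma isPartition_pair_compl {s : Finset (Fin m)} (hs : s.Nonempty) (hsc : sᶜ.Nonempty) :
    IsPartition ({s, sᶜ} : Ptn m) := by
  refine ⟨by simp [hs, hsc], fun i => ?_⟩
  by_cases hi : i ∈ s
  · exact ⟨s, by simp [hi], by aesop⟩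
  · exact ⟨sᶜ, by simp [hi], by aesop⟩

lemma pair_compl_mem_Pset (hm : 3 ≤ m) (hq : 2 ≤ q) (p : OO m) :
    ({p.1, p.1ᶜ} : Ptn m) ∈ Pset m q := by
  refine ⟨isPartition_pair_compl (card_pos.1 (by omega)) (card_pos.1 ?_),
    (card_insert_le _ _).trans (by simpa using hq)⟩
  rw [card_compl, p.2, Fintype.card_fin]
  omega

lemma Delta_pair_compl (p t : OO m) (h : ({p.1, p.1ᶜ} : Ptn m) ∈ Pset m q) :
    Delta (⟨{p.1, p.1ᶜ}, h⟩ : PP m q) t = Bmat m p t := by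
  have hsub : t.1 ⊆ p.1 ↔ #(p.1 ∩ t.1) = 2 := by
    rw [← eq_iff_card_inter_eq_two p.2 t.2]
    exact ⟨fun h => (eq_of_subset_of_card_le h (by rw [p.2, t.2])).symm, fun h => h ▸ subset_rfl⟩
  have hsubc : t.1 ⊆ p.1ᶜ ↔ #(p.1 ∩ t.1) = 0 := by
    rw [subset_compl_iff_disjoint_right, card_eq_zero, disjoint_iff_inter_eq_empty, inter_comm]
  have hle := card_inter_le_two (t := t.1) p.2
  simp only [Delta, Bmat, Matrix.of_apply, exists_mem_insert, mem_singleton, exists_eq_left,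
    hsub, hsubc]
  split_ifs <;> first | rfl | omega

lemma WLin_apply (η : PP m q → ℚ) (t : OO m) :
    WLin m q η t = ∑ α : PP m q, η α * Delta α t := rfl

lemma WLin_sum_indicator_pair_compl (hm : 3 ≤ m) (hq : 2 ≤ q) (c : OO m → ℚ) :
    WLin m q (fun α => ∑ p, c p * if α.1 = ({p.1, p.1ᶜ} : Ptn m) then 1 else 0)
      = c ᵥ* Bmat m := by
  funext t
  simp only [WLin_apply, Matrix.vecMul, dotProduct, sum_mul, mul_assoc]
  rw [sum_comm]
  refine sum_congr rfl fun p _ => ?_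
  rw [← mul_sum, sum_eq_single ⟨_, pair_compl_mem_Pset hm hq p⟩, if_pos rfl, one_mul,
    Delta_pair_compl]
  · intro α _ hα
    rw [if_neg fun h => hα (Subtype.ext h), zero_mul]
  · simp

lemma xi_eq_vecMul_Dmat (x : OO m → ℚ) :
    xi m q x = fun α => ∑ p, (x ᵥ* Dmat m) p * if α.1 = ({p.1, p.1ᶜ} : Ptn m) then 1 else 0 := by
  funext α
  simp only [xi, Matrix.vecMul, dotProduct, mul_sum, sum_mul, mul_assoc]
  exact sum_comm

end PairPartition

section Dmat

variable {m : ℕ}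

lemma Dmat_apply (r p : OO m) :
    Dmat m r p = (-2 + ((m : ℚ) - 2) * #(p.1 ∩ r.1)
      - ((m : ℚ) - 2) * ((m : ℚ) - 4) * (if p.1 = r.1 then 1 else 0))
        / (2 * ((m : ℚ) - 2) * ((m : ℚ) - 4)) := by
  simp only [Dmat, Matrix.of_apply]
  congr 1
  by_cases h : r = p
  · subst h
    rw [if_pos rfl, if_pos rfl, inter_self, r.2]
    push_cast
    ring
  · have hne : p.1 ≠ r.1 := fun h' => h (Subtype.ext h'.symm)
    have hcard : #(p.1 ∩ r.1) ≠ 2 := (eq_iff_card_inter_eq_two p.2 r.2).not.1 hne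
    have hle := card_inter_le_two (t := r.1) p.2
    rw [if_neg h, if_neg hne, inter_comm]
    obtain h0 | h1 : #(p.1 ∩ r.1) = 0 ∨ #(p.1 ∩ r.1) = 1 := by omega
    · rw [h0]
      norm_num
    · rw [h1, if_pos rfl]
      push_cast
      ring

lemma one_apply_eq_card_inter (r t : OO m) :
    (1 : Matrix (OO m) (OO m) ℚ) r t = #(t.1 ∩ r.1) * (#(t.1 ∩ r.1) - 1 : ℚ) / 2 := by
  by_cases h : r = t
  · subst h
    rw [Matrix.one_apply_eq, inter_self, r.2]
    norm_num
  · have hcard : #(t.1 ∩ r.1) ≠ 2 :=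
      (eq_iff_card_inter_eq_two t.2 r.2).not.1 fun h' => h (Subtype.ext h'.symm)
    have hle := card_inter_le_two (t := r.1) t.2
    rw [Matrix.one_apply_ne h]
    obtain h0 | h1 : #(t.1 ∩ r.1) = 0 ∨ #(t.1 ∩ r.1) = 1 := by omega
    · simp [h0]
    · simp [h1]

theorem Dmat_mul_Bmat (hm : 5 ≤ m ∨ m = 3) : Dmat m * Bmat m = 1 := by
  have h2 : (m : ℚ) - 2 ≠ 0 := sub_ne_zero.2 (by norm_cast; omega)
  have h4 : (m : ℚ) - 4 ≠ 0 := sub_ne_zero.2 (by norm_cast; omega)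
  ext r t
  set den : ℚ := 2 * ((m : ℚ) - 2) * ((m : ℚ) - 4)
  let g : Finset (Fin m) → ℚ := fun s => (-2 + ((m : ℚ) - 2) * #(s ∩ r.1)
    - ((m : ℚ) - 2) * ((m : ℚ) - 4) * (if s = r.1 then 1 else 0)) / den
  let a : Fin m → ℚ := fun i => if i ∈ r.1 then 1 else 0
  have hg : ∀ e ∈ t.1, ∀ x ∈ t.1ᶜ, g {e, x} = -2 / den + ((m - 2) / den) * (a e + a x)
      + (-((m - 2) * (m - 4)) / den) * (a e * a x) := by
    intro e he x hx
    have hex : e ≠ x := fun h => mem_compl.1 hx (h ▸ he)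
    simp only [g, a, card_pair_inter hex, pair_eq_iff hex r.2]
    by_cases her : e ∈ r.1 <;> by_cases hxr : x ∈ r.1 <;> simp [her, hxr] <;> ring
  have hS : ∑ e ∈ t.1, a e = #(t.1 ∩ r.1) := by
    simp [a]
  have hT : ∑ x ∈ t.1ᶜ, a x = 2 - #(t.1 ∩ r.1) := by
    rw [eq_sub_iff_add_eq, ← hS, sum_compl_add_sum]
    simp [a, r.2]
  calc (Dmat m * Bmat m) r t
      = ∑ p ∈ univ.filter (fun p : OO m => #(p.1 ∩ t.1) = 1), g p.1 := by
        simp only [Matrix.mul_apply, Bmat, Matrix.of_apply, mul_ite, mul_one, mul_zero,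
          ← sum_filter]
        exact sum_congr rfl fun p _ => Dmat_apply r p
    _ = ∑ e ∈ t.1, ∑ x ∈ t.1ᶜ, g {e, x} := sum_pairs_card_inter_eq_one _ _
    _ = ∑ e ∈ t.1, ∑ x ∈ t.1ᶜ, (-2 / den + ((m - 2) / den) * (a e + a x)
          + (-((m - 2) * (m - 4)) / den) * (a e * a x)) :=
        sum_congr rfl fun e he => sum_congr rfl fun x hx => hg e he x hx
    _ = #(t.1 ∩ r.1) * (#(t.1 ∩ r.1) - 1 : ℚ) / 2 := by
        rw [sum_sum_add_mul, hS, hT, card_compl, t.2, Fintype.card_fin,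
          Nat.cast_sub (by omega)]
        simp only [den]
        field_simp
        ring
    _ = (1 : Matrix (OO m) (OO m) ℚ) r t := (one_apply_eq_card_inter r t).symm

end Dmat

/-- for `q ≥ 2` and `m ≥ 5` or `m = 3`, `W(ξ_x) = x` for every
`x ∈ F(O,ℚ)`; in particular `W` is surjective. -/
theorem W_xi_eq_self (m q : ℕ) (hq : 2 ≤ q) (hm : 5 ≤ m ∨ m = 3) :
    (∀ x : OO m → ℚ, WLin m q (xi m q x) = x) ∧ Function.Surjective (WLin m q) := by
  have hW (x : OO m → ℚ) : WLin m q (xi m q x) = x := by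
    rw [xi_eq_vecMul_Dmat, WLin_sum_indicator_pair_compl (by omega) hq, Matrix.vecMul_vecMul,
      Dmat_mul_Bmat hm, Matrix.vecMul_one]
  exact ⟨hW, fun x => ⟨xi m q x, hW x⟩⟩
end

section
/- Let q ≥ 2 and let m be an integer with m ≥ 5 or m = 3. If η_0 ∈ Ker W and η_1 ∈ V_0, then Stab_W(η_0 + η_1) = Stab_W(η_1) = Stab(η_1). -/
/-! `Δ` is invariant under relabelling, so `W` commutes with the action of `S(M)` and `Ker W` is
`S(M)`-stable; this gives `Stab_W(η₀ + η₁) = Stab_W(η₁)`. For the second equality, `V₀` is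
`S(M)`-stable and `W` is injective on `V₀`, so `g(η₁) - η₁ ∈ V₀ ∩ Ker W` vanishes.

Injectivity: for `η ∈ V₀` put `x(r) = η({r, M ∖ r})`; since `r ↦ {r, M ∖ r}` is injective for
`m ≠ 4`, `W(η) = x B`. If `x B = 0`, the vertex sums `s_i = Σ_{r ∋ i} x(r)` satisfy
`s_a + s_b = 2 x({a, b})`, hence `2 s_i = (m - 2) s_i + Σ_j s_j`. Summing over `i` gives
`(m - 2) Σ_j s_j = 0`, then `(m - 4) s_i = 0`, and `s = 0` forces `x = 0`. -/

open Matrix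

section Action

variable {m q : ℕ}

theorem permPart_inv_permPart (g : Equiv.Perm (Fin m)) (α : Ptn m) :
    permPart g⁻¹ (permPart g α) = α := by
  simp [permPart, Finset.image_image, Function.comp_def]

theorem permPart_permPart_inv (g : Equiv.Perm (Fin m)) (α : Ptn m) :
    permPart g (permPart g⁻¹ α) = α := by
  simpa using permPart_inv_permPart g⁻¹ α

def permPPEquiv (q : ℕ) (g : Equiv.Perm (Fin m)) : PP m q ≃ PP m q where
  toFun := permPP g
  invFun := permPP g⁻¹
  left_inv α := Subtype.ext (permPart_inv_permPart g α.1)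
  right_inv α := Subtype.ext (permPart_permPart_inv g α.1)

def permOO (g : Equiv.Perm (Fin m)) (p : OO m) : OO m :=
  ⟨permPair g p.1, by rw [permPair, Finset.card_image_of_injective _ g.injective, p.2]⟩

theorem Delta_permPP (g : Equiv.Perm (Fin m)) (α : PP m q) (p : OO m) :
    Delta (permPP g α) (permOO g p) = Delta α p := by
  simp [Delta, permPP, permPart, permOO, permPair, Finset.image_subset_image_iff g.injective]

theorem permOO_permOO_inv (g : Equiv.Perm (Fin m)) (p : OO m) : permOO g (permOO g⁻¹ p) = p :=
  Subtype.ext (by simp [permOO, permPair, Finset.image_image, Function.comp_def])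

theorem WLin_permF_apply (g : Equiv.Perm (Fin m)) (η : PP m q → ℚ) (p : OO m) :
    WLin m q (permF g η) p = WLin m q η (permOO g⁻¹ p) := by
  change ∑ α, η (permPP g⁻¹ α) * Delta α p = ∑ α, η α * Delta α (permOO g⁻¹ p)
  rw [← (permPPEquiv q g).sum_comp]
  refine Finset.sum_congr rfl fun α _ => ?_
  have hα : permPP g⁻¹ (permPP g α) = α := (permPPEquiv q g).left_inv α
  change η (permPP g⁻¹ (permPP g α)) * Delta (permPP g α) p = _
  rw [hα, ← Delta_permPP g α (permOO g⁻¹ p), permOO_permOO_inv]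

theorem WLin_permF_eq_zero (g : Equiv.Perm (Fin m)) {η : PP m q → ℚ} (h : WLin m q η = 0) :
    WLin m q (permF g η) = 0 := by
  funext p
  rw [WLin_permF_apply, h, Pi.zero_apply, Pi.zero_apply]

theorem permPair_compl (g : Equiv.Perm (Fin m)) (p : Finset (Fin m)) :
    permPair g pᶜ = (permPair g p)ᶜ := by
  ext i
  simp [permPair, ← Equiv.eq_symm_apply]

theorem permPart_insert_compl (g : Equiv.Perm (Fin m)) (p : Finset (Fin m)) :
    permPart g {p, pᶜ} = {permPair g p, (permPair g p)ᶜ} := by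
  rw [← permPair_compl]
  simp [permPart, permPair]

theorem permF_mem_V0 (g : Equiv.Perm (Fin m)) {η : PP m q → ℚ} (hη : η ∈ V0 m q) :
    permF g η ∈ V0 m q := by
  refine fun α hα => hη _ fun ⟨p, hp, hαp⟩ => hα ⟨permPair g p, ?_, ?_⟩
  · rwa [permPair, Finset.card_image_of_injective _ g.injective]
  · rw [← permPart_permPart_inv g α.1, ← permPart_insert_compl]
    exact congrArg (permPart g) hαp

end Action

section Bmat

variable {m : ℕ}

def pairOO {i j : Fin m} (h : i ≠ j) : OO m := ⟨{i, j}, Finset.card_pair h⟩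

def incidenceSum (x : OO m → ℚ) (i : Fin m) : ℚ :=
  ∑ r : OO m, if i ∈ r.1 then x r else 0

theorem card_inter_le_two_s15 (r t : OO m) : (r.1 ∩ t.1).card ≤ 2 :=
  (Finset.card_le_card Finset.inter_subset_right).trans_eq t.2

theorem card_inter_eq_two_iff (r t : OO m) : (r.1 ∩ t.1).card = 2 ↔ r = t := by
  refine ⟨fun h => Subtype.ext ?_, fun h => by rw [h, Finset.inter_self, t.2]⟩
  have hr : r.1 ∩ t.1 = r.1 :=
    Finset.eq_of_subset_of_card_le Finset.inter_subset_left (by rw [h, r.2])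
  have ht : r.1 ∩ t.1 = t.1 :=
    Finset.eq_of_subset_of_card_le Finset.inter_subset_right (by rw [h, t.2])
  exact hr.symm.trans ht

theorem Bmat_add_ite_eq_card_inter (r t : OO m) :
    Bmat m r t + (if r = t then 2 else 0) = ((r.1 ∩ t.1).card : ℚ) := by
  have hle := card_inter_le_two_s15 r t
  simp only [Bmat, Matrix.of_apply, ← card_inter_eq_two_iff]
  interval_cases h : (r.1 ∩ t.1).card <;> norm_num

theorem card_inter_pair {a b : Fin m} (hab : a ≠ b) (r : Finset (Fin m)) :
    ((r ∩ {a, b}).card : ℚ) = (if a ∈ r then 1 else 0) + (if b ∈ r then 1 else 0) := by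
  rw [Finset.inter_comm, ← Finset.filter_mem_eq_inter, Finset.natCast_card_filter,
    Finset.sum_pair hab]

theorem incidenceSum_add_incidenceSum (x : OO m → ℚ) {a b : Fin m} (hab : a ≠ b) :
    incidenceSum x a + incidenceSum x b = (x ᵥ* Bmat m) (pairOO hab) + 2 * x (pairOO hab) := by
  simp only [incidenceSum, vecMul, dotProduct, ← Finset.sum_add_distrib]
  rw [← Fintype.sum_ite_eq' (pairOO hab) fun r => 2 * x r, ← Finset.sum_add_distrib]
  refine Finset.sum_congr rfl fun r _ => ?_
  have hcard := Bmat_add_ite_eq_card_inter r (pairOO hab)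
  rw [show (pairOO hab).1 = {a, b} from rfl, card_inter_pair hab] at hcard
  split_ifs at hcard ⊢ <;> linear_combination -x r * hcard

theorem sum_ite_mem_eq_sum_pairOO (f : OO m → ℚ) (i : Fin m) :
    ∑ r : OO m, (if i ∈ r.1 then f r else 0) = ∑ j : {j // j ≠ i}, f (pairOO j.2.symm) := by
  rw [← Finset.sum_filter]
  refine (Finset.sum_bij (fun j _ => pairOO j.2.symm) ?_ ?_ ?_ fun _ _ => rfl).symm
  · simp [pairOO]
  · intro j _ k _ hjk
    have hj : j.1 ∈ ({i, k.1} : Finset (Fin m)) := by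
      rw [← show (pairOO k.2.symm).1 = {i, k.1} from rfl, ← hjk]
      exact Finset.mem_insert_of_mem (Finset.mem_singleton_self _)
    exact Subtype.ext (Finset.mem_singleton.1 ((Finset.mem_insert.1 hj).resolve_left j.2))
  · intro r hr
    have hir : i ∈ r.1 := (Finset.mem_filter.1 hr).2
    obtain ⟨j, hj⟩ := Finset.card_eq_one.1
      (by rw [Finset.card_erase_of_mem hir, r.2] : (r.1.erase i).card = 1)
    have hji : j ≠ i := Finset.ne_of_mem_erase (hj ▸ Finset.mem_singleton_self j)
    refine ⟨⟨j, hji⟩, Finset.mem_univ _, Subtype.ext ?_⟩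
    change insert i {j} = r.1
    rw [← hj, Finset.insert_erase hir]

theorem eq_zero_of_two_mul_eq_sub_two_mul_add_sum (hm2 : m ≠ 2) (hm4 : m ≠ 4) {s : Fin m → ℚ}
    (h : ∀ i, 2 * s i = ((m : ℚ) - 2) * s i + ∑ j, s j) : s = 0 := by
  have hm2' : (m : ℚ) - 2 ≠ 0 := sub_ne_zero.2 (by exact_mod_cast hm2)
  have hm4' : (m : ℚ) - 4 ≠ 0 := sub_ne_zero.2 (by exact_mod_cast hm4)
  have hsum : ((m : ℚ) - 2) * ∑ j, s j = 0 := by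
    have := Finset.sum_congr rfl fun i (_ : i ∈ Finset.univ) => h i
    simp only [Finset.sum_add_distrib, ← Finset.mul_sum, Finset.sum_const, Finset.card_univ,
      Fintype.card_fin, nsmul_eq_mul] at this
    linear_combination -this / 2
  have hS : ∑ j, s j = 0 := (mul_eq_zero.1 hsum).resolve_left hm2'
  funext i
  have hi : ((m : ℚ) - 4) * s i = 0 := by linear_combination -(h i) - hS
  exact (mul_eq_zero.1 hi).resolve_left hm4'

theorem eq_zero_of_vecMul_Bmat_eq_zero (hm2 : m ≠ 2) (hm4 : m ≠ 4) {x : OO m → ℚ}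
    (h : x ᵥ* Bmat m = 0) : x = 0 := by
  set s := incidenceSum x
  have hpair : ∀ {a b : Fin m} (hab : a ≠ b), s a + s b = 2 * x (pairOO hab) := fun hab => by
    rw [incidenceSum_add_incidenceSum x hab, h, Pi.zero_apply, zero_add]
  have hs : s = 0 := eq_zero_of_two_mul_eq_sub_two_mul_add_sum hm2 hm4 fun i => by
    have hcard : ((Finset.univ.erase i).card : ℚ) = m - 1 := by
      rw [Finset.card_erase_of_mem (Finset.mem_univ i), Finset.card_univ, Fintype.card_fin,
        Nat.cast_pred i.pos]
    calc 2 * s i = ∑ j : {j // j ≠ i}, 2 * x (pairOO j.2.symm) := by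
          rw [← Finset.mul_sum, ← sum_ite_mem_eq_sum_pairOO]; rfl
      _ = ∑ j : {j // j ≠ i}, (s i + s j) :=
          Finset.sum_congr rfl fun j _ => (hpair j.2.symm).symm
      _ = ∑ j ∈ Finset.univ.erase i, (s i + s j) :=
          (Finset.sum_subtype _ (fun j => by simp) fun j => s i + s j).symm
      _ = ((m : ℚ) - 2) * s i + ∑ j, s j := by
          rw [Finset.sum_add_distrib, Finset.sum_const, nsmul_eq_mul, hcard,
            Finset.sum_erase_eq_sub (Finset.mem_univ i)]
          ring
  funext r
  obtain ⟨a, b, hab, hr⟩ := Finset.card_eq_two.1 r.2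
  obtain rfl : r = pairOO hab := Subtype.ext hr
  have := hpair hab
  rw [hs, Pi.zero_apply, Pi.zero_apply] at this
  rw [Pi.zero_apply]
  linarith

end Bmat

section PairPartitions

variable {m q : ℕ}

theorem insert_compl_mem_Pset {r : Finset (Fin m)} (hr : r.Nonempty) (hrc : rᶜ.Nonempty)
    (hq : 2 ≤ q) : ({r, rᶜ} : Ptn m) ∈ Pset m q := by
  refine ⟨⟨by simp [hr, hrc], fun i => ?_⟩, (Finset.card_le_two).trans hq⟩
  by_cases hi : i ∈ r
  · exact ⟨r, by simp [hi]⟩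
  · exact ⟨rᶜ, by simp [hi]⟩

variable (hm : 3 ≤ m) (hq : 2 ≤ q)

theorem card_compl_OO (r : OO m) : r.1ᶜ.card = m - 2 := by
  rw [Finset.card_compl, r.2, Fintype.card_fin]

def pairPP (r : OO m) : PP m q :=
  ⟨{r.1, r.1ᶜ}, insert_compl_mem_Pset (Finset.card_pos.1 (by omega))
    (Finset.card_pos.1 (by rw [card_compl_OO]; omega)) hq⟩

theorem exists_pairPP_eq {α : PP m q} (hα : α.1 ∈ P2set m) : ∃ r, pairPP hm hq r = α :=
  let ⟨p, hp, hαp⟩ := hα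
  ⟨⟨p, hp⟩, Subtype.ext hαp.symm⟩

theorem pairPP_injective (hm4 : m ≠ 4) : Function.Injective (pairPP (q := q) hm hq) := by
  intro r r' h
  have hr : r.1 ∈ ({r'.1, r'.1ᶜ} : Ptn m) := by
    change r.1 ∈ (pairPP (q := q) hm hq r').1
    rw [← h]
    exact Finset.mem_insert_self _ _
  rcases Finset.mem_insert.1 hr with hr | hr
  · exact Subtype.ext hr
  · have := congrArg Finset.card (Finset.mem_singleton.1 hr)
    rw [r.2, card_compl_OO] at this
    omega

theorem Delta_pairPP (r t : OO m) : Delta (pairPP hm hq r) t = Bmat m r t := by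
  have hle := card_inter_le_two_s15 r t
  have hsub : t.1 ⊆ r.1 ↔ (r.1 ∩ t.1).card = 2 := by
    rw [card_inter_eq_two_iff]
    refine ⟨fun h => Subtype.ext ?_, fun h => h ▸ subset_rfl⟩
    exact (Finset.eq_of_subset_of_card_le h (by rw [r.2, t.2])).symm
  have hdisj : t.1 ⊆ r.1ᶜ ↔ (r.1 ∩ t.1).card = 0 := by
    rw [Finset.subset_compl_iff_disjoint_right, Finset.card_eq_zero, Finset.inter_comm,
      Finset.disjoint_iff_inter_eq_empty]
  simp only [Delta, pairPP, Bmat, Matrix.of_apply, Finset.mem_insert, Finset.mem_singleton,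
    exists_eq_or_imp, exists_eq_left, hsub, hdisj]
  split_ifs <;> first | rfl | (exfalso; omega)

theorem WLin_eq_vecMul_Bmat (hm4 : m ≠ 4) {η : PP m q → ℚ} (hη : η ∈ V0 m q) :
    WLin m q η = (η ∘ pairPP hm hq) ᵥ* Bmat m := by
  funext t
  change ∑ α, η α * Delta α t = ∑ r, η (pairPP hm hq r) * Bmat m r t
  simp_rw [← Delta_pairPP hm hq]
  rw [← Finset.sum_image (f := fun α => η α * Delta α t)
    fun r _ r' _ h => pairPP_injective hm hq hm4 h]
  refine (Finset.sum_subset (Finset.subset_univ _) fun α _ hα => ?_).symm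
  rw [hη α fun h => hα ?_, zero_mul]
  obtain ⟨r, rfl⟩ := exists_pairPP_eq hm hq h
  exact Finset.mem_image_of_mem _ (Finset.mem_univ r)

end PairPartitions

theorem eq_zero_of_mem_V0_of_WLin_eq_zero {m q : ℕ} (hm : 3 ≤ m) (hq : 2 ≤ q) (hm4 : m ≠ 4)
    {η : PP m q → ℚ} (hη : η ∈ V0 m q) (hW : WLin m q η = 0) : η = 0 := by
  have hx : η ∘ pairPP hm hq = 0 :=
    eq_zero_of_vecMul_Bmat_eq_zero (by omega) hm4 (by rw [← WLin_eq_vecMul_Bmat hm hq hm4 hη, hW])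
  funext α
  by_cases hα : α.1 ∈ P2set m
  · obtain ⟨r, rfl⟩ := exists_pairPP_eq hm hq hα
    exact congrFun hx r
  · exact hη α hα

/-- for `q ≥ 2` and `m ≥ 5` or `m = 3`, if `η₀ ∈ Ker W` and `η₁ ∈ V₀`, then
`Stab_W(η₀ + η₁) = Stab_W(η₁) = Stab(η₁)`. -/
theorem stabW_add (m q : ℕ) (hq : 2 ≤ q) (hm : 5 ≤ m ∨ m = 3)
    (η₀ η₁ : PP m q → ℚ) (h₀ : WLin m q η₀ = 0) (h₁ : η₁ ∈ V0 m q) :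
    StabWSet m q (η₀ + η₁) = StabWSet m q η₁ ∧ StabWSet m q η₁ = StabSet η₁ := by
  have hm3 : 3 ≤ m := by omega
  have hm4 : m ≠ 4 := by omega
  constructor
  · ext g
    change WLin m q (permF g η₀ + permF g η₁) = WLin m q (η₀ + η₁) ↔
      WLin m q (permF g η₁) = WLin m q η₁
    rw [map_add, map_add, WLin_permF_eq_zero g h₀, h₀, zero_add, zero_add]
  · ext g
    refine ⟨fun hg => ?_, fun hg => congrArg (WLin m q) hg⟩
    have hδ : permF g η₁ - η₁ ∈ V0 m q := fun α hα => by
      rw [Pi.sub_apply, permF_mem_V0 g h₁ α hα, h₁ α hα, sub_zero]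
    have hWδ : WLin m q (permF g η₁ - η₁) = 0 := by
      rw [map_sub, sub_eq_zero]
      exact hg
    exact sub_eq_zero.1 (eq_zero_of_mem_V0_of_WLin_eq_zero hm3 hq hm4 hδ hWδ)
end
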